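/- Let k : Fin n → ℝ, λ : Fin n → ℝ, R : Fin n → ℝ, C : Fin n → ℝ be positive, b, c > 0, and let d be a symmetric 0-1 adjacency matrix with zero diagonal such that Σ_{j ≠ i} d i j = k i. Define Q i i = λ i/(R i * C i) - k i * c / C i and Q i j = - b * d i j / C i for i ≠ j. If k i < λ i / (R i * (c + b)) for all i, then Q i i - Σ_{j ≠ i} |Q i j| > 0 for every i. -/

import Mathlib

/-!
Every off-diagonal entry of row `i` is `-(b d i j / C i)` with `d i j ∈ {0, 1}`, so the row's
absolute off-diagonal sum is `b k i / C i`. The diagonal margin is then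
`(λ i / R i - k i (c + b)) / C i`, which is positive exactly under the degree bound.
-/

open Finset

theorem sum_abs_neg_mul_div {ι : Type*} (s : Finset ι) (q d : ι → ℝ) {b C : ℝ}
    (hb : 0 ≤ b) (hC : 0 ≤ C) (hd : ∀ j ∈ s, 0 ≤ d j) (hq : ∀ j ∈ s, q j = -(b * d j / C)) :
    ∑ j ∈ s, |q j| = b * (∑ j ∈ s, d j) / C := by
  rw [mul_sum, sum_div]
  refine sum_congr rfl fun j hj => ?_
  rw [hq j hj, abs_neg, abs_of_nonneg (by have := hd j hj; positivity)]

theorem sub_mul_div_sub_mul_div_pos {lam R C k b c : ℝ} (hR : 0 < R) (hC : 0 < C)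
    (hcb : 0 < c + b) (hk : k < lam / (R * (c + b))) :
    0 < lam / (R * C) - k * c / C - b * k / C := by
  have hmargin : k * (c + b) < lam / R := by
    rwa [← div_div, lt_div_iff₀ hcb] at hk
  have hsplit : lam / (R * C) - k * c / C - b * k / C = (lam / R - k * (c + b)) / C := by
    field_simp
    ring
  rw [hsplit]
  exact div_pos (sub_pos.mpr hmargin) hC

theorem network_Q_diag_dominant_general (n : ℕ)
    (k lam R C : Fin n → ℝ) (b c : ℝ)
    (hR : ∀ i, 0 < R i)
    (hC : ∀ i, 0 < C i) (hb : 0 < b) (hc : 0 < c)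
    (d : Matrix (Fin n) (Fin n) ℝ)
    (hd01 : ∀ i j, d i j = 0 ∨ d i j = 1)
    (hdeg : ∀ i, ∑ j ∈ Finset.univ.erase i, d i j = k i)
    (Q : Matrix (Fin n) (Fin n) ℝ)
    (hQdiag : ∀ i, Q i i = lam i / (R i * C i) - k i * c / C i)
    (hQoff : ∀ i j, i ≠ j → Q i j = - (b * d i j / C i))
    (hbound : ∀ i, k i < lam i / (R i * (c + b))) :
    ∀ i : Fin n, 0 < Q i i - ∑ j ∈ Finset.univ.erase i, |Q i j| := by
  intro i
  have hd : ∀ j ∈ univ.erase i, 0 ≤ d i j := fun j _ => by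
    rcases hd01 i j with h | h <;> simp [h]
  have hrow : ∑ j ∈ univ.erase i, |Q i j| = b * k i / C i := by
    rw [sum_abs_neg_mul_div _ _ _ hb.le (hC i).le hd
      (fun j hj => hQoff i j (ne_of_mem_erase hj).symm), hdeg i]
  rw [hrow, hQdiag i]
  exact sub_mul_div_sub_mul_div_pos (hR i) (hC i) (add_pos hc hb) (hbound i)

/-- Diagonal dominance of Q = BΛ⁻¹ - |A| for the Prisoner's Dilemma network,
under the degree bound k i < λ i / (R i (c + b)). -/
theorem network_Q_diag_dominant (n : ℕ)
    (k lam R C : Fin n → ℝ) (b c : ℝ)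
    (hk : ∀ i, 0 < k i) (hlam : ∀ i, 0 < lam i) (hR : ∀ i, 0 < R i)
    (hC : ∀ i, 0 < C i) (hb : 0 < b) (hc : 0 < c)
    (d : Matrix (Fin n) (Fin n) ℝ)
    (hdsymm : ∀ i j, d i j = d j i)
    (hd01 : ∀ i j, d i j = 0 ∨ d i j = 1)
    (hddiag : ∀ i, d i i = 0)
    (hdeg : ∀ i, ∑ j ∈ Finset.univ.erase i, d i j = k i)
    (Q : Matrix (Fin n) (Fin n) ℝ)
    (hQdiag : ∀ i, Q i i = lam i / (R i * C i) - k i * c / C i)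
    (hQoff : ∀ i j, i ≠ j → Q i j = - (b * d i j / C i))
    (hbound : ∀ i, k i < lam i / (R i * (c + b))) :
    ∀ i : Fin n, 0 < Q i i - ∑ j ∈ Finset.univ.erase i, |Q i j| :=
  network_Q_diag_dominant_general n k lam R C b c hR hC hb hc d hd01 hdeg Q hQdiag hQoff hbound
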